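/- arXiv:2012.04938 — 4 statements merged into one kernel-verified Lean document; each statement's English description precedes it below -/
import Mathlib

section
/- For u ∈ W and λ∨ ∈ P∨, the element u t_{λ∨} of the extended affine Weyl group satisfies ℓ(u t_{λ∨}) = Σ_{α ∈ R⁺} |⟨λ∨, α⟩ + χ(u(α) < 0)|, where χ(P) = 1 if the condition P holds and 0 otherwise. -/
/-!
Write `χ(γ) ∈ {0, 1}` for the indicator of `γ` being a negative root. A real affine root
`(γ, n)` with `γ ∈ R` is positive iff `χ(γ) ≤ n`, so `(γ, n)` is an inversion of `u t_{λ∨}`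
iff `χ(γ) ≤ n < ⟨γ, λ∨⟩ + χ(u γ)`. Hence the fibre over `γ` has `(⟨γ, λ∨⟩ + χ(u γ) - χ(γ))₊`
elements. For `α ∈ R⁺` the fibres over `α` and `-α` have sizes `k₊` and `(-k)₊` with
`k = ⟨α, λ∨⟩ + χ(u α)`, which add up to `|k|`.
-/

open Finset

theorem Set.ncard_setOf_snd_mem_Ico {α : Type*} (s : Finset α) (a b : α → ℤ) :
    {p : α × ℤ | p.1 ∈ s ∧ p.2 ∈ Set.Ico (a p.1) (b p.1)}.ncard =
      ∑ x ∈ s, (b x - a x).toNat := by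
  have hset : {p : α × ℤ | p.1 ∈ s ∧ p.2 ∈ Set.Ico (a p.1) (b p.1)} =
      ↑((s.sigma fun x => Finset.Ico (a x) (b x)).map (Equiv.sigmaEquivProd α ℤ).toEmbedding) := by
    ext ⟨x, n⟩
    simp
  rw [hset, Set.ncard_coe_finset, card_map, card_sigma]
  exact sum_congr rfl fun x _ => Int.card_Ico _ _

section RootSplitting

variable {M : Type*} [InvolutiveNeg M] [DecidableEq M] {R Rpos : Finset M}

theorem Finset.sum_eq_sum_pos_add_neg {β : Type*} [AddCommMonoid β]
    (hRsplit : ∀ γ, γ ∈ R ↔ (γ ∈ Rpos ∨ -γ ∈ Rpos)) (hdisj : ∀ γ ∈ Rpos, -γ ∉ Rpos)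
    (g : M → β) : ∑ γ ∈ R, g γ = ∑ α ∈ Rpos, (g α + g (-α)) := by
  have hR : R = Rpos ∪ Rpos.image Neg.neg := by
    ext γ
    rw [hRsplit, mem_union, mem_image]
    exact or_congr_right ⟨fun h => ⟨-γ, h, neg_neg γ⟩, by rintro ⟨α, hα, rfl⟩; simpa⟩
  have hdisj' : Disjoint Rpos (Rpos.image Neg.neg) := by
    rw [disjoint_left]
    intro _ hγ hγ'
    obtain ⟨α, hα, rfl⟩ := mem_image.1 hγ'
    exact hdisj α hα hγ
  rw [hR, sum_union hdisj', sum_image neg_injective.injOn, sum_add_distrib]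

variable (Rpos) in
def negIndicator (γ : M) : ℤ := if -γ ∈ Rpos then 1 else 0

theorem negIndicator_of_mem_pos (hdisj : ∀ γ ∈ Rpos, -γ ∉ Rpos) {α : M} (hα : α ∈ Rpos) :
    negIndicator Rpos α = 0 :=
  if_neg (hdisj α hα)

theorem negIndicator_neg (hRsplit : ∀ γ, γ ∈ R ↔ (γ ∈ Rpos ∨ -γ ∈ Rpos))
    (hdisj : ∀ γ ∈ Rpos, -γ ∉ Rpos) {γ : M} (hγ : γ ∈ R) :
    negIndicator Rpos (-γ) = 1 - negIndicator Rpos γ := by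
  unfold negIndicator
  rw [neg_neg]
  rcases (hRsplit γ).1 hγ with h | h
  · simp [h, hdisj γ h]
  · have : γ ∉ Rpos := fun h' => hdisj γ h' h
    simp [h, this]

theorem pos_affine_iff_negIndicator_le (hRsplit : ∀ γ, γ ∈ R ↔ (γ ∈ Rpos ∨ -γ ∈ Rpos))
    (hdisj : ∀ γ ∈ Rpos, -γ ∉ Rpos) {γ : M} (hγ : γ ∈ R) (n : ℤ) :
    (0 < n ∨ (n = 0 ∧ γ ∈ Rpos)) ↔ negIndicator Rpos γ ≤ n := by
  unfold negIndicator
  rcases (hRsplit γ).1 hγ with h | h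
  · simp only [h, hdisj γ h, and_true, if_false]
    omega
  · have : γ ∉ Rpos := fun h' => hdisj γ h' h
    simp only [h, this, and_false, or_false, if_true]
    omega

end RootSplitting

/-- For `u ∈ W` and `λ∨ ∈ P∨`, the element `u t_{λ∨}` of the extended
affine Weyl group satisfies
`ℓ(u t_{λ∨}) = Σ_{α ∈ R⁺} |⟨λ∨, α⟩ + χ(u(α) < 0)|`,
where the length is the number of inversions among positive real affine roots
(modeled as pairs `(α, n) = α + nε`), and `u t_{λ∨}` acts on affine roots by
`(α, n) ↦ (u(α), n − ⟨α, λ∨⟩)`. -/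
theorem stmt4 {M : Type*} [AddCommGroup M] [DecidableEq M]
    (R Rpos : Finset M)
    (hRsplit : ∀ γ, γ ∈ R ↔ (γ ∈ Rpos ∨ -γ ∈ Rpos))
    (hdisj : ∀ γ ∈ Rpos, -γ ∉ Rpos)
    -- u ∈ W permutes the finite roots
    (u : M ≃+ M) (hu : ∀ γ ∈ R, u γ ∈ R)
    -- λ∨ ∈ P∨ as an additive functional ⟨·, λ∨⟩ on the root lattice
    (lv : M →+ ℤ)
    -- the action of u t_{λ∨} on affine real roots
    (act : M × ℤ → M × ℤ) (hact : ∀ α n, act (α, n) = (u α, n - lv α))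
    -- positive real affine roots
    (pos : Set (M × ℤ))
    (hpos : pos = {β | β.1 ∈ R ∧ (0 < β.2 ∨ (β.2 = 0 ∧ β.1 ∈ Rpos))})
    -- ℓ(u t_{λ∨}) = number of inversions
    (len : ℕ) (hlen : len = Set.ncard {β ∈ pos | act β ∉ pos}) :
    (len : ℤ) = ∑ α ∈ Rpos, |lv α + (if -(u α) ∈ Rpos then 1 else 0)| := by
  have hinv : {β ∈ pos | act β ∉ pos} = {p : M × ℤ | p.1 ∈ R ∧
      p.2 ∈ Set.Ico (negIndicator Rpos p.1) (lv p.1 + negIndicator Rpos (u p.1))} := by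
    ext ⟨γ, n⟩
    simp only [hpos, hact, Set.mem_ofPred_eq, Set.mem_Ico]
    by_cases hγ : γ ∈ R
    · rw [pos_affine_iff_negIndicator_le hRsplit hdisj hγ,
        pos_affine_iff_negIndicator_le hRsplit hdisj (hu γ hγ)]
      simp only [hγ, hu γ hγ, true_and]
      exact and_congr_right fun _ => by omega
    · simp [hγ]
  have hfibre_neg : ∀ α ∈ Rpos, lv (-α) + negIndicator Rpos (u (-α)) - negIndicator Rpos (-α) =
      -(lv α + negIndicator Rpos (u α)) := by
    intro α hα
    have hαR : α ∈ R := (hRsplit α).2 (Or.inl hα)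
    rw [map_neg, map_neg, negIndicator_neg hRsplit hdisj (hu α hαR),
      negIndicator_neg hRsplit hdisj hαR, negIndicator_of_mem_pos hdisj hα]
    ring
  rw [hlen, hinv, Set.ncard_setOf_snd_mem_Ico (b := fun γ => lv γ + negIndicator Rpos (u γ)),
    sum_eq_sum_pos_add_neg hRsplit hdisj, Nat.cast_sum]
  refine sum_congr rfl fun α hα => ?_
  rw [hfibre_neg α hα, negIndicator_of_mem_pos hdisj hα, sub_zero,
    Int.toNat_add_toNat_neg_eq_natAbs, Int.natCast_natAbs]
  rfl
end

section
/- In Q̃_aff, for any real affine root α = γ + kε, the identity 1 − δ_{t_{−α∨}} = γ A_α + γ A_{ε−α} − γ² A_α A_{ε−α} holds. -/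
/-!
Multiplying by `γ` clears the denominators: `γ A_α = 1 − δ_{s_α}` and `γ A_{ε−α} = δ_{s_{ε−α}} − 1`.
For the quadratic term, moving `γ⁻¹` past `1 − δ_{s_α}` turns it into `1 + δ_{s_α}` because
`s_α(γ⁻¹) = −γ⁻¹`, so `γ² A_α A_{ε−α} = (1 + δ_{s_α})(δ_{s_{ε−α}} − 1)`, and the three terms
combine to `1 − δ_{s_α} δ_{s_{ε−α}} = 1 − δ_{t_{−α∨}}`.
-/

section SmashProduct

variable {F A G : Type*} [Field F] [Ring A] [Group G] [MulSemiringAction G F]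
  (ι : F →+* A) (δ : G → A)

theorem RingHom.map_mul_map_inv {γ : F} (hγ : γ ≠ 0) : ι γ * ι γ⁻¹ = 1 := by
  rw [← map_mul, mul_inv_cancel₀ hγ, map_one]

theorem one_sub_delta_mul_of_smul_eq_neg
    (hcomm : ∀ (g : G) (f : F), δ g * ι f = ι (g • f) * δ g)
    {s : G} {γ : F} (hsγ : s • γ = -γ) :
    (1 - δ s) * ι γ⁻¹ = ι γ⁻¹ * (1 + δ s) := by
  have hsγinv : s • γ⁻¹ = -γ⁻¹ := by rw [smul_inv'', hsγ, inv_neg]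
  rw [sub_mul, one_mul, hcomm, hsγinv, map_neg, mul_add, mul_one, neg_mul, sub_neg_eq_add]

end SmashProduct

theorem stmt9_general {F A : Type*} [Field F] [Ring A]
    {G : Type*} [Group G] [MulSemiringAction G F]
    (ι : F →+* A) (δ : G → A)
    (hδmul : ∀ g h : G, δ (g * h) = δ g * δ h)
    (hcomm : ∀ (g : G) (f : F), δ g * ι f = ι (g • f) * δ g)
    -- s = s_α and s' = s_{ε−α}
    (s s' : G) (γ : F) (hγ : γ ≠ 0)
    (hsγ : s • γ = -γ)
    -- t_{−α∨} = s_α s_{ε−α}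
    (t : G) (ht : t = s * s')
    (Aα Aε : A)
    (hAα : Aα = ι γ⁻¹ * (1 - δ s))
    (hAε : Aε = ι (-γ)⁻¹ * (1 - δ s')) :
    1 - δ t = ι γ * Aα + ι γ * Aε - ι γ * ι γ * (Aα * Aε) := by
  have hγinv := ι.map_mul_map_inv hγ
  have hAε' : Aε = -(ι γ⁻¹ * (1 - δ s')) := by rw [hAε, inv_neg, map_neg, neg_mul]
  have hlinα : ι γ * Aα = 1 - δ s := by rw [hAα, ← mul_assoc, hγinv, one_mul]
  have hlinε : ι γ * Aε = δ s' - 1 := by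
    rw [hAε', mul_neg, ← mul_assoc, hγinv, one_mul, neg_sub]
  have hquad : ι γ * ι γ * (Aα * Aε) = (1 + δ s) * (δ s' - 1) := by
    calc ι γ * ι γ * (Aα * Aε) = ι γ * (ι γ * Aα * ι γ⁻¹) * -(1 - δ s') := by
          rw [hAε']; noncomm_ring
      _ = (1 + δ s) * (δ s' - 1) := by
          rw [hlinα, one_sub_delta_mul_of_smul_eq_neg ι δ hcomm hsγ, ← mul_assoc, hγinv,
            one_mul, neg_sub]
  rw [hlinα, hlinε, hquad, ht, hδmul]
  noncomm_ring

/-- In `Q̃_aff`, for any real affine root `α = γ + kε` (with finite part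
`γ`), the identity `1 − δ_{t_{−α∨}} = γ A_α + γ A_{ε−α} − γ² A_α A_{ε−α}` holds.
Here `t_{−α∨} = s_α s_{ε−α}`, `A_α = (1/γ)(δ_e − δ_{s_α})`, and
`A_{ε−α} = (1/(−γ))(δ_e − δ_{s_{ε−α}})` since the finite part of `ε−α` is `−γ`;
moreover `s_α(γ) = −γ`. -/
theorem stmt9 {F A : Type*} [Field F] [Ring A]
    {G : Type*} [Group G] [MulSemiringAction G F]
    (ι : F →+* A) (δ : G → A)
    (hδmul : ∀ g h : G, δ (g * h) = δ g * δ h)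
    (hδone : δ 1 = 1)
    (hcomm : ∀ (g : G) (f : F), δ g * ι f = ι (g • f) * δ g)
    -- s = s_α and s' = s_{ε−α}
    (s s' : G) (γ : F) (hγ : γ ≠ 0)
    (hsγ : s • γ = -γ)
    -- t_{−α∨} = s_α s_{ε−α}
    (t : G) (ht : t = s * s')
    (Aα Aε : A)
    (hAα : Aα = ι γ⁻¹ * (1 - δ s))
    (hAε : Aε = ι (-γ)⁻¹ * (1 - δ s')) :
    1 - δ t = ι γ * Aα + ι γ * Aε - ι γ * ι γ * (Aα * Aε) :=
  stmt9_general ι δ hδmul hcomm s s' γ hγ hsγ t ht Aα Aε hAα hAε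
end

section
/- For a cominuscule node i with minuscule coweight ϖ_i∨, the element τ_i(v_i) = τ_i v_i τ_i⁻¹ lies in W_aff⁻, i.e., ℓ(τ_i(v_i) s_j) > ℓ(τ_i(v_i)) for every finite simple reflection s_j (j = 1,…,n); equivalently, τ_i(v_i) is a minimal length representative of its coset modulo W. -/
/-- For a cominuscule node `i` with minuscule coweight `ϖ_i∨`, the
element `τ_i(v_i) = τ_i v_i τ_i⁻¹` lies in `W_aff⁻`, i.e.
`ℓ(τ_i(v_i) s_k) > ℓ(τ_i(v_i))` for every simple reflection `s_k` with `k ≠ 0`;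
equivalently `τ_i(v_i)` is a minimal length representative of its coset modulo `W`.
Here `v_i` is the maximal element of `W^{P_i}` (so `ℓ(v_i s_j) > ℓ(v_i)` for every
affine simple reflection index `j ≠ i`, including `j = 0` since `v_i ∈ W`), and
conjugation by `τ_i` is a length preserving automorphism realizing a diagram
automorphism `f` of the affine Dynkin diagram with `f(i) = 0`. -/
theorem stmt17 {G : Type*} [Group G] {Iaff : Type*}
    (s : Iaff → G)          -- the affine simple reflections
    (len : G → ℕ)           -- the Coxeter length on W_aff
    (zero i : Iaff) (hzi : zero ≠ i)
    (vi : G)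
    (hvi : ∀ j : Iaff, j ≠ i → len vi < len (vi * s j))
    -- conjugation by τ_i
    (φ : G ≃* G) (f : Equiv.Perm Iaff)
    (hφs : ∀ j, φ (s j) = s (f j))
    (hφlen : ∀ w, len (φ w) = len w)
    (hfi : f i = zero) :
    ∀ k : Iaff, k ≠ zero → len (φ vi) < len (φ vi * s k) := by
  intro k hk
  have hj : f.symm k ≠ i := by
    intro h
    apply hk
    rw [← hfi, ← h, Equiv.apply_symm_apply]
  have := hvi _ hj
  have key : φ vi * s k = φ (vi * s (f.symm k)) := by
    rw [map_mul, hφs, Equiv.apply_symm_apply]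
  rw [key, hφlen, hφlen]
  exact this
end

section
/- For the involution ι(ν∨, β) = (s_β(ν∨), −t_{ν∨}(β)) on the set P of pairs (ν∨, β) with ν∨ in the W-orbit of an antidominant coweight μ∨, β a positive real affine root, and t_{ν∨} s_β covered by t_{ν∨} in the affine Bruhat order: ι is a well-defined involution of P, and t_{ν∨} s_β = t_{s_β(ν∨)} s_{−t_{ν∨}(β)}. -/
/-!
Conjugating `s_β` by `t_ν` gives `s_{t_ν(β)}`, and conjugating `t_ν` by `s_{t_ν(β)}` gives
`t_{s_β(ν)}`, since `β` and `t_ν(β)` have the same finite part; hence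
`t_ν s_β = s_{t_ν(β)} t_ν = t_{s_β(ν)} s_{−t_ν(β)}`. The two sides have the same length
because `t_ν` and `t_{s_β(ν)}` do, so the covering `t_ν s_β ⋖ t_ν` transports to the image
pair, and Björner–Brenti makes `−t_ν(β)` positive. That `ι` is an involution is a computation
with the reflection `ν ↦ ν − ⟨γ, ν⟩ γ∨`.
-/

theorem mul_eq_mul_of_conj_eq {G : Type*} [Group G] {a b a' b' : G}
    (h₁ : a * b * a⁻¹ = b') (h₂ : b' * a * b'⁻¹ = a') : a * b = a' * b' :=
  calc a * b = b' * a := mul_inv_eq_iff_eq_mul.mp h₁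
    _ = a' * b' := mul_inv_eq_iff_eq_mul.mp h₂

theorem cover_of_mul_eq_of_len_eq {G ι : Type*} [Group G] {s : ι → G} {len : G → ℕ}
    {le cover : G → G → Prop} (hcover : ∀ x y, cover x y ↔ (le x y ∧ len x + 1 = len y))
    (hrefl : ∀ x β, len (x * s β) < len x → le (x * s β) x)
    {x x' : G} {β β' : ι} (heq : x' * s β' = x * s β) (hlen : len x' = len x)
    (hcov : cover (x * s β) x) : cover (x' * s β') x' := by
  rw [hcover] at hcov ⊢
  refine ⟨hrefl x' β' ?_, ?_⟩ <;> rw [heq, hlen] <;> omega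

section Reflection

variable {M N : Type*} [AddCommGroup M] [AddCommGroup N] (pair : M →+ N →+ ℤ) (coroot : M → N)

/-- The map `ι` in coordinates: `(ν, γ + kε) ↦ (s_γ(ν), −γ + (⟨γ, ν⟩ − k)ε)`. -/
def reflectPair (p : N × (M × ℤ)) : N × (M × ℤ) :=
  (p.1 - pair p.2.1 p.1 • coroot p.2.1, (-p.2.1, pair p.2.1 p.1 - p.2.2))

variable {pair coroot}

theorem pair_sub_pair_smul_coroot {γ : M} (h : pair γ (coroot γ) = 2) (ν : N) :
    pair γ (ν - pair γ ν • coroot γ) = -pair γ ν := by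
  rw [map_sub, map_zsmul, h, smul_eq_mul]
  ring

theorem reflectPair_reflectPair {ν : N} {γ : M} {k : ℤ} (h : pair γ (coroot γ) = 2)
    (hneg : coroot (-γ) = -coroot γ) :
    reflectPair pair coroot (reflectPair pair coroot (ν, (γ, k))) = (ν, (γ, k)) := by
  simp only [reflectPair, map_neg, AddMonoidHom.neg_apply, hneg, neg_neg,
    pair_sub_pair_smul_coroot h, Prod.mk.injEq, true_and]
  constructor
  · module
  · ring

end Reflection

theorem stmt18_general {M N : Type*} [AddCommGroup M] [AddCommGroup N]
    {G : Type*} [Group G]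
    -- finite roots, and positivity for affine real roots
    (Rfin : Set M) (hRneg : ∀ γ ∈ Rfin, -γ ∈ Rfin)
    (pos : Set (M × ℤ))
    -- the pairing ⟨γ, ν∨⟩ and the coroots
    (pair : M →+ N →+ ℤ) (coroot : M → N)
    (hpair2 : ∀ γ ∈ Rfin, pair γ (coroot γ) = 2)
    (hcorootneg : ∀ γ ∈ Rfin, coroot (-γ) = -coroot γ)
    -- translations and reflections in the extended affine Weyl group G
    (t : N → G)
    (s : M × ℤ → G)
    -- the actions of translations on affine roots, and of reflections on coweights
    (tAct : N → M × ℤ → M × ℤ)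
    (htAct : ∀ (ν : N) (γ : M) (k : ℤ), tAct ν (γ, k) = (γ, k - pair γ ν))
    (sAct : M × ℤ → N → N)
    (hsAct : ∀ β ν, sAct β ν = ν - pair β.1 ν • coroot β.1)
    -- group relations
    (hconj1 : ∀ ν β, t ν * s β * (t ν)⁻¹ = s (tAct ν β))
    (hconj2 : ∀ β ν, s β * t ν * (s β)⁻¹ = t (sAct β ν))
    (hsneg : ∀ β, s (-β) = s β)
    -- length, Bruhat order and covering relations
    (len : G → ℕ) (le : G → G → Prop) (cover : G → G → Prop)
    (hcover : ∀ x y, cover x y ↔ (le x y ∧ len x + 1 = len y))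
    (hrefl : ∀ x β, len (x * s β) < len x → le (x * s β) x)
    (hlenorbit : ∀ ν β, len (t (sAct β ν)) = len (t ν))
    -- Björner–Brenti: if t_ν s_β ⋖ t_ν then t_ν(β) < 0
    (hBB : ∀ ν β, β ∈ pos → cover (t ν * s β) (t ν) →
      -(tAct ν β) ∈ pos ∧ tAct ν β ∉ pos)
    -- the W-orbit of the antidominant coweight μ∨
    (Orb : Set N) (hOrb : ∀ ν ∈ Orb, ∀ β, sAct β ν ∈ Orb)
    -- the set P
    (P : Set (N × (M × ℤ)))
    (hP : P = {p | p.1 ∈ Orb ∧ p.2 ∈ pos ∧ p.2.1 ∈ Rfin ∧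
      cover (t p.1 * s p.2) (t p.1)})
    (ι : N × (M × ℤ) → N × (M × ℤ))
    (hι : ∀ p, ι p = (sAct p.2 p.1, -(tAct p.1 p.2))) :
    (∀ p ∈ P, t p.1 * s p.2 = t (sAct p.2 p.1) * s (-(tAct p.1 p.2)))
    ∧ (∀ p ∈ P, ι p ∈ P)
    ∧ (∀ p ∈ P, ι (ι p) = p) := by
  subst hP
  have hι' : ∀ p, ι p = reflectPair pair coroot p := by
    rintro ⟨ν, γ, k⟩
    simp [hι, hsAct, htAct, reflectPair]
  have hfactor : ∀ ν β, t ν * s β = t (sAct β ν) * s (-(tAct ν β)) := by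
    rintro ν ⟨γ, k⟩
    have hsame : sAct (tAct ν (γ, k)) ν = sAct (γ, k) ν := by simp only [hsAct, htAct]
    rw [hsneg, ← hsame]
    exact mul_eq_mul_of_conj_eq (hconj1 ν _) (hconj2 _ ν)
  refine ⟨fun p _ => hfactor p.1 p.2, ?_, ?_⟩
  · rintro ⟨ν, γ, k⟩ ⟨hν, hβ, hγ, hcov⟩
    refine hι _ ▸ ⟨hOrb ν hν _, (hBB ν _ hβ hcov).1, ?_, ?_⟩
    · simpa [htAct] using hRneg γ hγ
    · exact cover_of_mul_eq_of_len_eq hcover hrefl (hfactor ν _).symm (hlenorbit ν _) hcov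
  · rintro ⟨ν, γ, k⟩ ⟨-, -, hγ, -⟩
    rw [hι', hι']
    exact reflectPair_reflectPair (hpair2 γ hγ) (hcorootneg γ hγ)

/-- For the map `ι(ν∨, β) = (s_β(ν∨), −t_{ν∨}(β))` on the set `P` of
pairs `(ν∨, β)` with `ν∨` in the `W`-orbit of an antidominant coweight, `β` a positive
real affine root, and `t_{ν∨} s_β ⋖ t_{ν∨}` in the affine Bruhat order: `ι` is a
well-defined involution of `P`, and `t_{ν∨} s_β = t_{s_β(ν∨)} s_{−t_{ν∨}(β)}`.
Affine real roots are pairs `(γ, k) = γ + kε`; `t_{ν∨}(γ + kε) = γ + (k − ⟨γ,ν∨⟩)ε`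
and `s_β(ν∨) = ν∨ − ⟨γ_β, ν∨⟩ γ_β∨`. -/
theorem stmt18 {M N : Type*} [AddCommGroup M] [AddCommGroup N]
    {G : Type*} [Group G]
    -- finite roots, and positivity for affine real roots
    (Rfin : Set M) (hRneg : ∀ γ ∈ Rfin, -γ ∈ Rfin)
    (pos : Set (M × ℤ))
    -- the pairing ⟨γ, ν∨⟩ and the coroots
    (pair : M →+ N →+ ℤ) (coroot : M → N)
    (hpair2 : ∀ γ ∈ Rfin, pair γ (coroot γ) = 2)
    (hcorootneg : ∀ γ ∈ Rfin, coroot (-γ) = -coroot γ)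
    -- translations and reflections in the extended affine Weyl group G
    (t : N → G) (ht : ∀ a b : N, t (a + b) = t a * t b)
    (s : M × ℤ → G)
    -- the actions of translations on affine roots, and of reflections on coweights
    (tAct : N → M × ℤ → M × ℤ)
    (htAct : ∀ (ν : N) (γ : M) (k : ℤ), tAct ν (γ, k) = (γ, k - pair γ ν))
    (sAct : M × ℤ → N → N)
    (hsAct : ∀ β ν, sAct β ν = ν - pair β.1 ν • coroot β.1)
    -- group relations
    (hconj1 : ∀ ν β, t ν * s β * (t ν)⁻¹ = s (tAct ν β))
    (hconj2 : ∀ β ν, s β * t ν * (s β)⁻¹ = t (sAct β ν))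
    (hsneg : ∀ β, s (-β) = s β)
    -- length, Bruhat order and covering relations
    (len : G → ℕ) (le : G → G → Prop) (cover : G → G → Prop)
    (hcover : ∀ x y, cover x y ↔ (le x y ∧ len x + 1 = len y))
    (hrefl : ∀ x β, len (x * s β) < len x → le (x * s β) x)
    (hlenorbit : ∀ ν β, len (t (sAct β ν)) = len (t ν))
    -- Björner–Brenti: if t_ν s_β ⋖ t_ν then t_ν(β) < 0
    (hBB : ∀ ν β, β ∈ pos → cover (t ν * s β) (t ν) →
      -(tAct ν β) ∈ pos ∧ tAct ν β ∉ pos)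
    -- the W-orbit of the antidominant coweight μ∨
    (Orb : Set N) (hOrb : ∀ ν ∈ Orb, ∀ β, sAct β ν ∈ Orb)
    -- the set P
    (P : Set (N × (M × ℤ)))
    (hP : P = {p | p.1 ∈ Orb ∧ p.2 ∈ pos ∧ p.2.1 ∈ Rfin ∧
      cover (t p.1 * s p.2) (t p.1)})
    (ι : N × (M × ℤ) → N × (M × ℤ))
    (hι : ∀ p, ι p = (sAct p.2 p.1, -(tAct p.1 p.2))) :
    (∀ p ∈ P, t p.1 * s p.2 = t (sAct p.2 p.1) * s (-(tAct p.1 p.2)))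
    ∧ (∀ p ∈ P, ι p ∈ P)
    ∧ (∀ p ∈ P, ι (ι p) = p) :=
  stmt18_general Rfin hRneg pos pair coroot hpair2 hcorootneg t s tAct htAct sAct hsAct hconj1
    hconj2 hsneg len le cover hcover hrefl hlenorbit hBB Orb hOrb P hP ι hι
end
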